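/- arXiv:2603.02824 — 4 statements merged into one kernel-verified Lean document; each statement's English description precedes it below -/
import Mathlib

section
/- Let G be a graph and e_1,...,e_q pairwise disjoint edges of G. Suppose e_i = {x,y} for some i, where the only neighbor of x in G is y. Then the even-connection graph G^{e_1···e_q} equals the even-connection graph of G \ {x,y} with respect to the remaining edges e_1,...,e_{i-1},e_{i+1},...,e_q. -/
variable {V : Type*}

/-- `M` is a set of pairwise disjoint edges of `G` with all endpoints in `F`. -/
def IsMatchingOn (G : SimpleGraph V) (F : Finset V) (M : Finset (Sym2 V)) : Prop :=
  (∀ e ∈ M, e ∈ G.edgeSet) ∧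
  (∀ e ∈ M, ∀ v ∈ e, v ∈ F) ∧
  (∀ e ∈ M, ∀ e' ∈ M, e ≠ e' → ∀ v ∈ e, v ∉ e')

/-- `F` is a face of the `q`-matching-free complex `MF^q(G)`. -/
def MFFace (G : SimpleGraph V) (q : ℕ) (F : Finset V) : Prop :=
  ¬ ∃ M : Finset (Sym2 V), IsMatchingOn G F M ∧ M.card = q

/-- `F` is a facet (maximal face) of the complex with face predicate `faces`. -/
def IsFacet (faces : Finset V → Prop) (F : Finset V) : Prop :=
  faces F ∧ ∀ F', faces F' → F ⊆ F' → F = F'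

/-- Even-connection of `u` and `v` with respect to the pairwise disjoint edges in `M`. -/
def EvenConnected (G : SimpleGraph V) (M : Finset (Sym2 V)) (u v : V) : Prop :=
  ∃ (r : ℕ) (p : ℕ → V), 1 ≤ r ∧ p 0 = u ∧ p (2 * r + 1) = v ∧
    (∀ k, k ≤ 2 * r → G.Adj (p k) (p (k + 1))) ∧
    (∀ k, k < r → s(p (2 * k + 1), p (2 * k + 2)) ∈ M) ∧
    (∀ k l, k < r → l < r →
      s(p (2 * k + 1), p (2 * k + 2)) = s(p (2 * l + 1), p (2 * l + 2)) → k = l)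

/-- The set of vertices covered by the edges in `M`. -/
def mSupp (M : Finset (Sym2 V)) : Set V := {v | ∃ e ∈ M, v ∈ e}

/-- The even-connection graph `G^{e₁⋯e_q}` (vertices covered by `M` are isolated). -/
def evenConnGraph (G : SimpleGraph V) (M : Finset (Sym2 V)) : SimpleGraph V where
  Adj x y := x ≠ y ∧ x ∉ mSupp M ∧ y ∉ mSupp M ∧
    (G.Adj x y ∨ EvenConnected G M x y ∨ EvenConnected G M y x)
  symm := by
    constructor
    rintro x y ⟨hne, hx, hy, h⟩
    refine ⟨hne.symm, hy, hx, ?_⟩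
    rcases h with h | h | h
    · exact Or.inl h.symm
    · exact Or.inr (Or.inr h)
    · exact Or.inr (Or.inl h)
  loopless := ⟨fun x h => h.1 rfl⟩

/-- Delete a set of vertices from a graph (keeping them as isolated vertices). -/
def delSet (G : SimpleGraph V) (S : Set V) : SimpleGraph V where
  Adj x y := G.Adj x y ∧ x ∉ S ∧ y ∉ S
  symm := ⟨fun x y ⟨h, hx, hy⟩ => ⟨h.symm, hy, hx⟩⟩
  loopless := ⟨fun x ⟨h, _, _⟩ => G.loopless.irrefl x h⟩

/-- The whisker graph `W(H)`: each vertex `x` (as `Sum.inl x`) gets a pendant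
whisker vertex `Sum.inr x`. -/
def whisker (H : SimpleGraph V) : SimpleGraph (V ⊕ V) where
  Adj x y :=
    (∃ a b, x = Sum.inl a ∧ y = Sum.inl b ∧ H.Adj a b) ∨
    (∃ a, (x = Sum.inl a ∧ y = Sum.inr a) ∨ (x = Sum.inr a ∧ y = Sum.inl a))
  symm := by
    constructor
    rintro x y (⟨a, b, hx, hy, hab⟩ | ⟨a, h | h⟩)
    · exact Or.inl ⟨b, a, hy, hx, hab.symm⟩
    · exact Or.inr ⟨a, Or.inr ⟨h.2, h.1⟩⟩
    · exact Or.inr ⟨a, Or.inl ⟨h.2, h.1⟩⟩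
  loopless := by
    constructor
    rintro x (⟨a, b, hx, hy, hab⟩ | ⟨a, ⟨h1, h2⟩ | ⟨h1, h2⟩⟩)
    · obtain rfl := Sum.inl_injective (hx ▸ hy : (Sum.inl a : V ⊕ V) = Sum.inl b)
      exact H.loopless.irrefl a hab
    · exact Sum.inl_ne_inr (h1 ▸ h2 : (Sum.inl a : V ⊕ V) = Sum.inr a)
    · exact Sum.inr_ne_inl (h1 ▸ h2 : (Sum.inr a : V ⊕ V) = Sum.inl a)

/-- Shellability of the complex with face predicate `faces`: there is a linear
order `F 0, F 1, …` of all facets such that each facet meets the union of the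
previous ones in a pure subcomplex of codimension one. -/
def Shellable (faces : Finset V → Prop) : Prop :=
  ∃ (t : ℕ) (F : Fin t → Finset V),
    (∀ i, IsFacet faces (F i)) ∧
    (∀ F', IsFacet faces F' → ∃ i, F' = F i) ∧
    Function.Injective F ∧
    ∀ k : Fin t, 0 < (k : ℕ) → ∀ σ : Finset V, σ ⊆ F k →
      (∃ i, i < k ∧ σ ⊆ F i) →
      ∃ τ : Finset V, σ ⊆ τ ∧ τ ⊆ F k ∧ (∃ i, i < k ∧ τ ⊆ F i) ∧
        τ.card = (F k).card - 1

/-- Vertex decomposability of the complex with face predicate `faces`. -/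
inductive VertexDecomposable [DecidableEq V] : (Finset V → Prop) → Prop
  | simplex (faces : Finset V → Prop) (F : Finset V)
      (h : ∀ F', faces F' ↔ F' ⊆ F) : VertexDecomposable faces
  | shed (faces : Finset V → Prop) (v : V)
      (hdel : VertexDecomposable (fun F => faces F ∧ v ∉ F))
      (hlink : VertexDecomposable (fun F => v ∉ F ∧ faces (insert v F)))
      (hshed : ∀ F, v ∉ F → faces (insert v F) →
        ¬ IsFacet (fun F' => faces F' ∧ v ∉ F') F) :
      VertexDecomposable faces

/-!
An even-connecting walk between two vertices outside the matching never meets the leaf edge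
`{x, y}`: if it traversed `{x, y}` as its `k`-th matched edge, the walk would have to reach or
leave `x` through its only neighbour `y`, so `y` would occur again just before or just after that
edge. Since `y` is covered only by `{x, y}`, this forces a second traversal of `{x, y}`, which
even-connection forbids. Hence the even-connecting walks of `G` with respect to `M` between
uncovered vertices are exactly those of `G \ {x, y}` with respect to `M \ {{x, y}}`.
-/

theorem eq_of_mem_of_mem_of_disjoint {M : Finset (Sym2 V)}
    (hdisj : ∀ e ∈ M, ∀ e' ∈ M, e ≠ e' → ∀ v ∈ e, v ∉ e')
    {e e' : Sym2 V} (he : e ∈ M) (he' : e' ∈ M) {w : V} (hw : w ∈ e) (hw' : w ∈ e') :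
    e = e' := by
  by_contra hne
  exact hdisj e he e' he' hne w hw hw'

theorem mem_mSupp_of_mem {M : Finset (Sym2 V)} {e : Sym2 V} (he : e ∈ M) {w : V} (hw : w ∈ e) :
    w ∈ mSupp M :=
  ⟨e, he, hw⟩

theorem mSupp_mono {M M' : Finset (Sym2 V)} (h : M ⊆ M') : mSupp M ⊆ mSupp M' :=
  fun _ ⟨e, he, hw⟩ => ⟨e, h he, hw⟩

theorem mem_mSupp_erase_of_notMem [DecidableEq V] {M : Finset (Sym2 V)} {e : Sym2 V} {w : V}
    (hw : w ∈ mSupp M) (hwe : w ∉ e) : w ∈ mSupp (M.erase e) := by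
  obtain ⟨f, hf, hwf⟩ := hw
  exact ⟨f, Finset.mem_erase.mpr ⟨fun hfe => hwe (hfe ▸ hwf), hf⟩, hwf⟩

theorem delSet_le (G : SimpleGraph V) (S : Set V) : delSet G S ≤ G :=
  fun _ _ h => h.1

theorem evenConnGraph_adj {G : SimpleGraph V} {M : Finset (Sym2 V)} {u v : V} :
    (evenConnGraph G M).Adj u v ↔ u ≠ v ∧ u ∉ mSupp M ∧ v ∉ mSupp M ∧
      (G.Adj u v ∨ EvenConnected G M u v ∨ EvenConnected G M v u) :=
  Iff.rfl

theorem EvenConnected.mono {G G' : SimpleGraph V} {M M' : Finset (Sym2 V)} (hG : G ≤ G')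
    (hM : M ⊆ M') {u v : V} (h : EvenConnected G M u v) : EvenConnected G' M' u v := by
  obtain ⟨r, p, hr, hp0, hpr, hadj, hmem, hinj⟩ := h
  exact ⟨r, p, hr, hp0, hpr, fun k hk => hG (hadj k hk), fun k hk => hM (hmem k hk), hinj⟩

theorem EvenConnected.notMem_delSet {G : SimpleGraph V} {S : Set V} {M : Finset (Sym2 V)}
    {u v : V} (h : EvenConnected (delSet G S) M u v) : u ∉ S ∧ v ∉ S := by
  obtain ⟨r, p, -, hp0, hpr, hadj, -⟩ := h
  exact ⟨hp0 ▸ (hadj 0 (Nat.zero_le _)).2.1, hpr ▸ (hadj (2 * r) le_rfl).2.2⟩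

theorem exists_matchedEdge_of_mem_mSupp {M : Finset (Sym2 V)} {r : ℕ} {p : ℕ → V}
    (hp0 : p 0 ∉ mSupp M) (hpr : p (2 * r + 1) ∉ mSupp M) {j : ℕ} (hj : j ≤ 2 * r + 1)
    (hjM : p j ∈ mSupp M) :
    ∃ k < r, (j = 2 * k + 1 ∨ j = 2 * k + 2) ∧ p j ∈ s(p (2 * k + 1), p (2 * k + 2)) := by
  have hj0 : j ≠ 0 := by rintro rfl; exact hp0 hjM
  have hjr : j ≠ 2 * r + 1 := by rintro rfl; exact hpr hjM
  have hjk : j = 2 * ((j - 1) / 2) + 1 ∨ j = 2 * ((j - 1) / 2) + 2 := by omega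
  refine ⟨(j - 1) / 2, by omega, hjk, ?_⟩
  rcases hjk with h | h <;> rw [← h] <;> simp

theorem index_eq_of_mem_matchedEdge {M : Finset (Sym2 V)}
    (hdisj : ∀ e ∈ M, ∀ e' ∈ M, e ≠ e' → ∀ v ∈ e, v ∉ e') {r : ℕ} {p : ℕ → V}
    (hp0 : p 0 ∉ mSupp M) (hpr : p (2 * r + 1) ∉ mSupp M)
    (hmem : ∀ k, k < r → s(p (2 * k + 1), p (2 * k + 2)) ∈ M)
    (hinj : ∀ k l, k < r → l < r →
      s(p (2 * k + 1), p (2 * k + 2)) = s(p (2 * l + 1), p (2 * l + 2)) → k = l)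
    {j k : ℕ} (hj : j ≤ 2 * r + 1) (hk : k < r) (hjk : p j ∈ s(p (2 * k + 1), p (2 * k + 2))) :
    j = 2 * k + 1 ∨ j = 2 * k + 2 := by
  obtain ⟨k', hk', hjk', hj'⟩ :=
    exists_matchedEdge_of_mem_mSupp hp0 hpr hj (mem_mSupp_of_mem (hmem k hk) hjk)
  obtain rfl := hinj k' k hk' hk
    (eq_of_mem_of_mem_of_disjoint hdisj (hmem k' hk') (hmem k hk) hj' hjk)
  exact hjk'

theorem EvenConnected.delSet_erase_of_leaf [DecidableEq V] {G : SimpleGraph V}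
    {M : Finset (Sym2 V)} (hdisj : ∀ e ∈ M, ∀ e' ∈ M, e ≠ e' → ∀ v ∈ e, v ∉ e')
    {x y : V} (he : s(x, y) ∈ M) (hleaf : ∀ z, G.Adj x z → z = y)
    {u v : V} (hu : u ∉ mSupp M) (hv : v ∉ mSupp M) (h : EvenConnected G M u v) :
    EvenConnected (delSet G {x, y}) (M.erase s(x, y)) u v := by
  obtain ⟨r, p, hr, rfl, rfl, hadj, hmem, hinj⟩ := h
  have hstep : ∀ k, k < r → s(p (2 * k + 1), p (2 * k + 2)) ≠ s(x, y) := by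
    intro k hk hkxy
    have hy : y ∈ s(p (2 * k + 1), p (2 * k + 2)) := hkxy ▸ Sym2.mem_mk_right x y
    -- `y` is the neighbour of `x` just before or just after the matched edge
    rcases Sym2.eq_iff.mp hkxy with ⟨hx, -⟩ | ⟨-, hx⟩
    · rw [← hleaf _ (hx ▸ (hadj (2 * k) (by omega)).symm)] at hy
      have := index_eq_of_mem_matchedEdge hdisj hu hv hmem hinj (by omega) hk hy
      omega
    · rw [← hleaf _ (hx ▸ hadj (2 * k + 2) (by omega))] at hy
      have := index_eq_of_mem_matchedEdge hdisj hu hv hmem hinj (by omega) hk hy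
      omega
  have havoid : ∀ j, j ≤ 2 * r + 1 → p j ∉ ({x, y} : Set V) := by
    intro j hj hjxy
    have hjxy' : p j ∈ s(x, y) := by simpa using hjxy
    obtain ⟨k, hk, -, hjk⟩ :=
      exists_matchedEdge_of_mem_mSupp hu hv hj (mem_mSupp_of_mem he hjxy')
    exact hstep k hk (eq_of_mem_of_mem_of_disjoint hdisj (hmem k hk) he hjk hjxy')
  refine ⟨r, p, hr, rfl, rfl, fun k hk => ⟨hadj k hk, havoid k (by omega),
    havoid (k + 1) (by omega)⟩, fun k hk => Finset.mem_erase.mpr ⟨hstep k hk, hmem k hk⟩, hinj⟩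

/-- if `e_i = {x,y}` is one of the pairwise disjoint edges and the only
neighbor of `x` in `G` is `y`, then `G^{e₁⋯e_q}` equals the even-connection graph of
`G \ {x,y}` with respect to the remaining edges. -/
theorem evenConnGraph_leaf_remove
    {V : Type*} [DecidableEq V] (G : SimpleGraph V) (M : Finset (Sym2 V))
    [Fintype V] (hM : IsMatchingOn G Finset.univ M)
    (x y : V) (he : s(x, y) ∈ M) (hleaf : ∀ z, G.Adj x z ↔ z = y) :
    evenConnGraph G M = evenConnGraph (delSet G {x, y}) (M.erase s(x, y)) := by
  have hxy : ∀ w, w ∈ s(x, y) ↔ w ∈ ({x, y} : Set V) := fun w => by simp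
  have hsupp : ∀ {w}, w ∉ ({x, y} : Set V) → w ∉ mSupp (M.erase s(x, y)) → w ∉ mSupp M :=
    fun hw hw' hwM => hw' (mem_mSupp_erase_of_notMem hwM (mt (hxy _).mp hw))
  have hxyM : ∀ {w}, w ∉ mSupp M → w ∉ ({x, y} : Set V) :=
    fun hw hwxy => hw (mem_mSupp_of_mem he ((hxy _).mpr hwxy))
  have hforward : ∀ {a b}, a ∉ mSupp M → b ∉ mSupp M → EvenConnected G M a b →
      EvenConnected (delSet G {x, y}) (M.erase s(x, y)) a b :=
    EvenConnected.delSet_erase_of_leaf hM.2.2 he (fun z => (hleaf z).mp)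
  ext u v
  simp only [evenConnGraph_adj]
  constructor
  · rintro ⟨hne, hu, hv, h⟩
    refine ⟨hne, fun h' => hu (mSupp_mono (M.erase_subset _) h'),
      fun h' => hv (mSupp_mono (M.erase_subset _) h'), ?_⟩
    rcases h with h | h | h
    · exact Or.inl ⟨h, hxyM hu, hxyM hv⟩
    · exact Or.inr (Or.inl (hforward hu hv h))
    · exact Or.inr (Or.inr (hforward hv hu h))
  · rintro ⟨hne, hu, hv, h⟩
    obtain ⟨hu', hv'⟩ : u ∉ ({x, y} : Set V) ∧ v ∉ ({x, y} : Set V) := by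
      rcases h with h | h | h
      exacts [⟨h.2.1, h.2.2⟩, h.notMem_delSet, h.notMem_delSet.symm]
    refine ⟨hne, hsupp hu' hu, hsupp hv' hv, ?_⟩
    have hmono : ∀ {a b}, EvenConnected (delSet G {x, y}) (M.erase s(x, y)) a b →
        EvenConnected G M a b := fun h => h.mono (delSet_le G _) (M.erase_subset _)
    exact h.imp (fun h => h.1) (Or.imp hmono hmono)
end

section
/- Let G be a graph, e_1,...,e_q pairwise disjoint edges of G (q ≥ 1), and let x be a vertex of G^{e_1···e_q}. Then deleting x from G^{e_1···e_q} gives the same graph as forming the even-connection graph of G \ x with respect to e_1,...,e_q: (G^{e_1···e_q}) \ x = (G \ x)^{e_1···e_q}. -/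
variable {V : Type*}

theorem mem_mSupp_of_matched_steps {M : Finset (Sym2 V)} {r : ℕ} {p : ℕ → V}
    (hmem : ∀ k, k < r → s(p (2 * k + 1), p (2 * k + 2)) ∈ M) {k : ℕ} (hk1 : 1 ≤ k)
    (hk2 : k ≤ 2 * r) : p k ∈ mSupp M := by
  obtain ⟨j, hj | hj⟩ : ∃ j, k = 2 * j + 1 ∨ k = 2 * j + 2 := ⟨(k - 1) / 2, by omega⟩
  · exact ⟨_, hmem j (by omega), hj ▸ Sym2.mem_mk_left _ _⟩
  · exact ⟨_, hmem j (by omega), hj ▸ Sym2.mem_mk_right _ _⟩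

namespace EvenConnected

variable {G H : SimpleGraph V} {M : Finset (Sym2 V)} {u v : V}

theorem mono_s3 (hGH : G ≤ H) (h : EvenConnected G M u v) : EvenConnected H M u v := by
  obtain ⟨r, p, hr, hp0, hpr, hadj, hmem, hinj⟩ := h
  exact ⟨r, p, hr, hp0, hpr, fun k hk => hGH (hadj k hk), hmem, hinj⟩

theorem delSet_iff {S : Set V} (hS : Disjoint S (mSupp M)) :
    EvenConnected (delSet G S) M u v ↔ EvenConnected G M u v ∧ u ∉ S ∧ v ∉ S := by
  refine ⟨fun h => ⟨h.mono_s3 (delSet_le G S), ?_, ?_⟩, fun ⟨h, hu, hv⟩ => ?_⟩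
  · obtain ⟨r, p, hr, rfl, -, hadj, -⟩ := h
    exact (hadj 0 (by omega)).2.1
  · obtain ⟨r, p, hr, -, rfl, hadj, -⟩ := h
    exact (hadj (2 * r) le_rfl).2.2
  obtain ⟨r, p, hr, rfl, rfl, hadj, hmem, hinj⟩ := h
  have hpS : ∀ k, k ≤ 2 * r + 1 → p k ∉ S := by
    intro k hk
    rcases Nat.eq_zero_or_pos k with rfl | hk0
    · exact hu
    rcases hk.eq_or_lt with rfl | hk'
    · exact hv
    exact hS.notMem_of_mem_right (mem_mSupp_of_matched_steps hmem hk0 (by omega))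
  exact ⟨r, p, hr, rfl, rfl,
    fun k hk => ⟨hadj k hk, hpS k (by omega), hpS (k + 1) (by omega)⟩, hmem, hinj⟩

end EvenConnected

theorem delSet_evenConnGraph {G : SimpleGraph V} {M : Finset (Sym2 V)} {S : Set V}
    (hS : Disjoint S (mSupp M)) :
    delSet (evenConnGraph G M) S = evenConnGraph (delSet G S) M := by
  ext u v
  change (_ ∧ _ ∧ _ ∧ _) ∧ _ ∧ _ ↔ _ ∧ _ ∧ _ ∧ ((_ ∧ _ ∧ _) ∨ _ ∨ _)
  rw [EvenConnected.delSet_iff hS, EvenConnected.delSet_iff hS]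
  tauto

theorem evenConnGraph_delete_vertex_general
    {V : Type*} (G : SimpleGraph V) (M : Finset (Sym2 V))
    (x : V) (hx : x ∉ mSupp M) :
    delSet (evenConnGraph G M) {x} = evenConnGraph (delSet G {x}) M :=
  delSet_evenConnGraph (Set.disjoint_singleton_left.2 hx)

/-- deleting a vertex `x` outside the support of the matching commutes
with forming the even-connection graph: `(G^{e₁⋯e_q}) \ x = (G \ x)^{e₁⋯e_q}`. -/
theorem evenConnGraph_delete_vertex
    {V : Type*} [Fintype V] (G : SimpleGraph V) (M : Finset (Sym2 V)) (q : ℕ) (hq : 1 ≤ q)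
    (hM : IsMatchingOn G Finset.univ M) (hcard : M.card = q)
    (x : V) (hx : x ∉ mSupp M) :
    delSet (evenConnGraph G M) {x} = evenConnGraph (delSet G {x}) M :=
  evenConnGraph_delete_vertex_general G M x hx
end

section
/- Let G = W(H) be a whisker graph with girth(H) = m, and suppose e_1,...,e_q are pairwise disjoint edges of G with 1 ≤ q < m/2 (or q ≤ ν(G) if H is acyclic). Then the independence complex of the even-connection graph G^{e_1···e_q} is vertex decomposable. -/
variable {V : Type*}

/-!
Off the matched vertices, the even-connection graph `Γ` of `W(H)` consists of the pairs
`x_a, y_a` with `a` unmatched and the whiskers `y_a` of matched `a`. A whisker is even-connected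
only through its own `x_a`, so the even connections between these vertices run along alternating
chains `c₀, c₁, …, c_{2r-1}` of `M`-edges `c_{2k} c_{2k+1}` and `H`-edges `c_{2k+1} c_{2k+2}`.
Since `2q < girth H` (or `H` is a forest), the matched vertices span a forest; two chains leaving
one `M`-edge in opposite directions lie on opposite sides of this bridge, so they glue into one
chain.

By Woodroofe's criterion, a vertex `u` with a neighbour `w` such that `N[w] ⊆ N[u]` is a
shedding vertex; here `w` is always a leaf on `u`. While some `x_a` remains, `y_a` is a leaf on
it. Once only whiskers remain, take a longest chain joining two of them, ending in the `M`-edge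
`z' z`: a neighbour of `y_{z'}` other than `y_z` would, by gluing, give a longer chain, so
`y_{z'}` is a leaf on `y_z`. That `y_{z'}` is still present is the invariant carried through
deletions and links: a remaining whisker `y_a` with a remaining neighbour keeps the whisker of
the mate of `a`.
-/

section IndependenceComplex

variable {V : Type*} [DecidableEq V] {Γ : SimpleGraph V} {T : Finset V} {u : V}

def inducedIndepComplex (Γ : SimpleGraph V) (T F : Finset V) : Prop :=
  F ⊆ T ∧ ∀ a ∈ F, ∀ b ∈ F, ¬ Γ.Adj a b

open Classical in
noncomputable def outsideClosedNbhd (Γ : SimpleGraph V) (T : Finset V) (u : V) : Finset V :=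
  {z ∈ T | z ≠ u ∧ ¬ Γ.Adj u z}

theorem mem_outsideClosedNbhd {z : V} :
    z ∈ outsideClosedNbhd Γ T u ↔ z ∈ T ∧ z ≠ u ∧ ¬ Γ.Adj u z := by
  simp [outsideClosedNbhd]

theorem outsideClosedNbhd_ssubset (hu : u ∈ T) : outsideClosedNbhd Γ T u ⊂ T :=
  Finset.ssubset_iff_of_subset (fun _ hz => (mem_outsideClosedNbhd.mp hz).1) |>.mpr
    ⟨u, hu, fun h => (mem_outsideClosedNbhd.mp h).2.1 rfl⟩

def HasDominatedNeighbor (Γ : SimpleGraph V) (T : Finset V) (u : V) : Prop :=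
  ∃ w ∈ T, Γ.Adj u w ∧ ∀ z ∈ T, Γ.Adj z w → z = u ∨ Γ.Adj z u

theorem inducedIndepComplex_erase :
    (fun F => inducedIndepComplex Γ T F ∧ u ∉ F) = inducedIndepComplex Γ (T.erase u) := by
  ext F
  simp only [inducedIndepComplex, Finset.subset_erase]
  tauto

theorem inducedIndepComplex_insert (hu : u ∈ T) :
    (fun F => u ∉ F ∧ inducedIndepComplex Γ T (insert u F)) =
      inducedIndepComplex Γ (outsideClosedNbhd Γ T u) := by
  ext F
  simp only [inducedIndepComplex, Finset.forall_mem_insert, Γ.irrefl, not_false_eq_true,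
    true_and, Finset.subset_iff, mem_outsideClosedNbhd]
  constructor
  · rintro ⟨huF, ⟨-, hFT⟩, hu, hind⟩
    exact ⟨fun z hz => ⟨hFT z hz, fun h => huF (h ▸ hz), hu z hz⟩, fun a ha => (hind a ha).2⟩
  · rintro ⟨hF, hind⟩
    exact ⟨fun h => (hF h).2.1 rfl, ⟨hu, fun z hz => (hF hz).1⟩, fun z hz => (hF hz).2.2,
      fun a ha => ⟨fun h => (hF ha).2.2 h.symm, hind a ha⟩⟩

theorem not_isFacet_of_hasDominatedNeighbor (h : HasDominatedNeighbor Γ T u) {F : Finset V}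
    (huF : u ∉ F) (hF : inducedIndepComplex Γ T (insert u F)) :
    ¬ IsFacet (inducedIndepComplex Γ (T.erase u)) F := by
  obtain ⟨w, hw, huw, hdom⟩ := h
  obtain ⟨hFT, hind⟩ := hF
  have hnu : ∀ z ∈ F, ¬ Γ.Adj z u := fun z hz hzu =>
    hind z (Finset.mem_insert_of_mem hz) u (Finset.mem_insert_self u F) hzu
  have hwF : w ∉ F := fun hwF => hnu w hwF huw.symm
  have hwface : inducedIndepComplex Γ (T.erase u) (insert w F) := by
    refine ⟨Finset.insert_subset (Finset.mem_erase.mpr ⟨huw.ne.symm, hw⟩) fun z hz =>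
      Finset.mem_erase.mpr ⟨fun h => huF (h ▸ hz), hFT (Finset.mem_insert_of_mem hz)⟩, ?_⟩
    have hnw : ∀ z ∈ F, ¬ Γ.Adj z w := fun z hz hzw =>
      (hdom z (hFT (Finset.mem_insert_of_mem hz)) hzw).elim (fun h => huF (h ▸ hz)) (hnu z hz)
    simp only [Finset.forall_mem_insert, Γ.irrefl, not_false_eq_true, true_and]
    exact ⟨fun z hz h => hnw z hz h.symm,
      fun a ha => ⟨hnw a ha, fun b hb => hind a (Finset.mem_insert_of_mem ha) b
        (Finset.mem_insert_of_mem hb)⟩⟩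
  exact fun hfacet =>
    hwF (hfacet.2 _ hwface (Finset.subset_insert w F) ▸ Finset.mem_insert_self w F)

/-- Woodroofe's shedding criterion, iterated along a family `P` of vertex sets. -/
theorem vertexDecomposable_inducedIndepComplex (P : Finset V → Prop)
    (hP : ∀ T, P T → (∃ a ∈ T, ∃ b ∈ T, Γ.Adj a b) →
      ∃ u ∈ T, HasDominatedNeighbor Γ T u ∧ P (T.erase u) ∧ P (outsideClosedNbhd Γ T u))
    (hT : P T) : VertexDecomposable (inducedIndepComplex Γ T) := by
  induction T using Finset.strongInduction with
  | H T ih =>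
  by_cases hE : ∃ a ∈ T, ∃ b ∈ T, Γ.Adj a b
  · obtain ⟨u, hu, hdom, hdel, hlink⟩ := hP T hT hE
    refine .shed _ u ?_ ?_ ?_
    · rw [inducedIndepComplex_erase]
      exact ih _ (Finset.erase_ssubset hu) hdel
    · rw [inducedIndepComplex_insert hu]
      exact ih _ (outsideClosedNbhd_ssubset hu) hlink
    · rw [inducedIndepComplex_erase]
      exact fun F => not_isFacet_of_hasDominatedNeighbor hdom
  · refine .simplex _ T fun F => ⟨And.left, fun hF => ⟨hF, ?_⟩⟩
    exact fun a ha b hb hab => hE ⟨a, hF ha, b, hF hb, hab⟩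

end IndependenceComplex

open Sum

section Matching

variable {W : Type*} {G : SimpleGraph W} {F : Finset W} {M : Finset (Sym2 W)}

theorem IsMatchingOn.eq_of_mem_of_mem (hM : IsMatchingOn G F M) {e e' : Sym2 W} (he : e ∈ M)
    (he' : e' ∈ M) {v : W} (hv : v ∈ e) (hv' : v ∈ e') : e = e' :=
  by_contra fun h => hM.2.2 e he e' he' h v hv hv'

theorem IsMatchingOn.eq_of_mk_mem_of_mk_mem (hM : IsMatchingOn G F M) {x y y' : W}
    (h : s(x, y) ∈ M) (h' : s(x, y') ∈ M) : y = y' := by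
  have := hM.eq_of_mem_of_mem h h' (Sym2.mem_mk_left x y) (Sym2.mem_mk_left x y')
  rcases Sym2.eq_iff.mp this with ⟨-, rfl⟩ | ⟨rfl, rfl⟩ <;> rfl

theorem mem_mSupp_of_mem_s13 {e : Sym2 W} (he : e ∈ M) {v : W} (hv : v ∈ e) : v ∈ mSupp M :=
  ⟨e, he, hv⟩

end Matching

section Whisker

variable {V : Type*} {H : SimpleGraph V} {M : Finset (Sym2 (V ⊕ V))}

@[simp]
theorem whisker_adj_inl_inl {a b : V} : (whisker H).Adj (inl a) (inl b) ↔ H.Adj a b := by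
  simp [whisker]

@[simp]
theorem whisker_adj_inr {x : V ⊕ V} {t : V} : (whisker H).Adj x (inr t) ↔ x = inl t := by
  cases x <;> simp [whisker, eq_comm]

@[simp]
theorem whisker_inr_adj {x : V ⊕ V} {t : V} : (whisker H).Adj (inr t) x ↔ x = inl t := by
  rw [SimpleGraph.adj_comm, whisker_adj_inr]

variable [Fintype V] (hM : IsMatchingOn (whisker H) Finset.univ M)
include hM

theorem IsMatchingOn.eq_of_inr_mem {e : Sym2 (V ⊕ V)} (he : e ∈ M) {t : V} (ht : inr t ∈ e) :
    e = s(inl t, inr t) := by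
  induction e with
  | _ x y =>
    have hxy : (whisker H).Adj x y := hM.1 _ he
    rcases Sym2.mem_iff.mp ht with rfl | rfl
    · rw [whisker_inr_adj.mp hxy, Sym2.eq_swap]
    · rw [whisker_adj_inr.mp hxy]

theorem IsMatchingOn.inl_mem_mSupp_of_inr_mem {a : V} (h : inr a ∈ mSupp M) :
    inl a ∈ mSupp M := by
  obtain ⟨e, he, hv⟩ := h
  exact mem_mSupp_of_mem_s13 he (hM.eq_of_inr_mem he hv ▸ Sym2.mem_mk_left _ _)

theorem IsMatchingOn.inr_not_mem_mSupp {a b : V} (h : s(inl a, inl b) ∈ M) :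
    inr a ∉ mSupp M := by
  rintro ⟨e, he, hv⟩
  have := hM.eq_of_mk_mem_of_mk_mem h (hM.eq_of_inr_mem he hv ▸ he)
  simp at this

end Whisker

section AltChain

variable {V : Type*} {H : SimpleGraph V} {M : Finset (Sym2 (V ⊕ V))} {r r₁ r₂ : ℕ}
  {c c₁ c₂ : ℕ → V}

def chainEdge (c : ℕ → V) (k : ℕ) : Sym2 (V ⊕ V) := s(inl (c (2 * k)), inl (c (2 * k + 1)))

/-- The interior `c 0, …, c (2r-1)` of an even-connecting walk: pairwise distinct edges
`c (2k) c (2k+1)` of `M`, linked by edges `c (2k+1) c (2k+2)` of `H`. -/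
structure IsAltChain (H : SimpleGraph V) (M : Finset (Sym2 (V ⊕ V))) (r : ℕ) (c : ℕ → V) :
    Prop where
  edge_mem : ∀ k < r, chainEdge c k ∈ M
  adj : ∀ k, k + 1 < r → H.Adj (c (2 * k + 1)) (c (2 * k + 2))
  edge_injOn : Set.InjOn (chainEdge c) (Set.Iio r)

def AltConnected (H : SimpleGraph V) (M : Finset (Sym2 (V ⊕ V))) (a b : V) : Prop :=
  ∃ r c, IsAltChain H M r c ∧ 0 < r ∧ c 0 = a ∧ c (2 * r - 1) = b

theorem inl_mem_chainEdge (c : ℕ → V) (i : ℕ) : inl (c i) ∈ chainEdge c (i / 2) := by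
  obtain ⟨k, rfl | rfl⟩ := Nat.even_or_odd' i
  · simp [chainEdge, show 2 * k / 2 = k by omega]
  · simp [chainEdge, show (2 * k + 1) / 2 = k by omega]

theorem chainEdge_reverse {k : ℕ} (hk : k < r) :
    chainEdge (fun i => c (2 * r - 1 - i)) k = chainEdge c (r - 1 - k) := by
  rw [chainEdge, chainEdge, show 2 * r - 1 - 2 * k = 2 * (r - 1 - k) + 1 by omega,
    show 2 * r - 1 - (2 * k + 1) = 2 * (r - 1 - k) by omega, Sym2.eq_swap]

theorem chainEdge_shift (k : ℕ) : chainEdge (fun i => c (i + 2)) k = chainEdge c (k + 1) := by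
  rw [chainEdge, chainEdge, show 2 * k + 2 = 2 * (k + 1) by ring,
    show 2 * k + 1 + 2 = 2 * (k + 1) + 1 by ring]

theorem chainEdge_append (k : ℕ) :
    chainEdge (fun i => if i < 2 * r₁ then c₁ i else c₂ (i - 2 * r₁)) k =
      if k < r₁ then chainEdge c₁ k else chainEdge c₂ (k - r₁) := by
  by_cases hk : k < r₁
  · simp [chainEdge, hk, show 2 * k < 2 * r₁ by omega, show 2 * k + 1 < 2 * r₁ by omega]
  · simp [chainEdge, hk, show ¬ 2 * k < 2 * r₁ by omega, show ¬ 2 * k + 1 < 2 * r₁ by omega,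
      show 2 * k - 2 * r₁ = 2 * (k - r₁) by omega,
      show 2 * k + 1 - 2 * r₁ = 2 * (k - r₁) + 1 by omega]

namespace IsAltChain

theorem reverse (hc : IsAltChain H M r c) : IsAltChain H M r (fun i => c (2 * r - 1 - i)) where
  edge_mem k hk := chainEdge_reverse hk ▸ hc.edge_mem _ (by omega)
  adj k hk := by
    rw [show 2 * r - 1 - (2 * k + 1) = 2 * (r - 2 - k) + 2 by omega,
      show 2 * r - 1 - (2 * k + 2) = 2 * (r - 2 - k) + 1 by omega]
    exact (hc.adj _ (by omega)).symm
  edge_injOn k hk l hl h := by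
    simp only [Set.mem_Iio] at hk hl
    rw [chainEdge_reverse hk, chainEdge_reverse hl] at h
    have := hc.edge_injOn (by simp; omega) (by simp; omega) h
    omega

theorem drop (hc : IsAltChain H M r c) : IsAltChain H M (r - 1) (fun i => c (i + 2)) where
  edge_mem k hk := chainEdge_shift k ▸ hc.edge_mem _ (by omega)
  adj k hk := by
    rw [show 2 * k + 1 + 2 = 2 * (k + 1) + 1 by ring, show 2 * k + 2 + 2 = 2 * (k + 1) + 2 by ring]
    exact hc.adj _ (by omega)
  edge_injOn k hk l hl h := by
    simp only [Set.mem_Iio] at hk hl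
    rw [chainEdge_shift, chainEdge_shift] at h
    have := hc.edge_injOn (by simp; omega) (by simp; omega) h
    omega

theorem append (h₁ : IsAltChain H M r₁ c₁) (h₂ : IsAltChain H M r₂ c₂)
    (hjoin : 0 < r₂ → H.Adj (c₁ (2 * r₁ - 1)) (c₂ 0))
    (hdisj : ∀ k < r₁, ∀ l < r₂, chainEdge c₁ k ≠ chainEdge c₂ l) :
    IsAltChain H M (r₁ + r₂) (fun i => if i < 2 * r₁ then c₁ i else c₂ (i - 2 * r₁)) where
  edge_mem k hk := by
    rw [chainEdge_append]
    split_ifs with h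
    · exact h₁.edge_mem k h
    · exact h₂.edge_mem _ (by omega)
  adj k hk := by
    rcases lt_trichotomy (k + 1) r₁ with h | h | h
    · rw [if_pos (by omega), if_pos (by omega)]
      exact h₁.adj k h
    · rw [if_pos (by omega), if_neg (by omega), show 2 * k + 1 = 2 * r₁ - 1 by omega,
        show 2 * k + 2 - 2 * r₁ = 0 by omega]
      exact hjoin (by omega)
    · rw [if_neg (by omega), if_neg (by omega), show 2 * k + 1 - 2 * r₁ = 2 * (k - r₁) + 1 by omega,
        show 2 * k + 2 - 2 * r₁ = 2 * (k - r₁) + 2 by omega]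
      exact h₂.adj _ (by omega)
  edge_injOn k hk l hl h := by
    simp only [Set.mem_Iio] at hk hl
    rw [chainEdge_append, chainEdge_append] at h
    split_ifs at h with hk₁ hl₁ hl₁
    · exact h₁.edge_injOn hk₁ hl₁ h
    · exact absurd h (hdisj k hk₁ _ (by omega))
    · exact absurd h.symm (hdisj l hl₁ _ (by omega))
    · have := h₂.edge_injOn (by simp; omega) (by simp; omega) h
      omega

theorem inl_mem_mSupp (hc : IsAltChain H M r c) {i : ℕ} (hi : i < 2 * r) :
    inl (c i) ∈ mSupp M :=
  mem_mSupp_of_mem_s13 (hc.edge_mem _ (by omega)) (inl_mem_chainEdge c i)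

theorem le_card (hc : IsAltChain H M r c) : r ≤ M.card := by
  simpa using Finset.card_le_card_of_injOn (chainEdge c)
    (fun k hk => hc.edge_mem k (Finset.mem_range.mp hk)) (by simpa using hc.edge_injOn)

variable [Fintype V] (hM : IsMatchingOn (whisker H) Finset.univ M)
include hM

theorem injOn (hc : IsAltChain H M r c) : Set.InjOn c (Set.Iio (2 * r)) := by
  intro i hi j hj hij
  simp only [Set.mem_Iio] at hi hj
  have hmem := inl_mem_chainEdge c j
  rw [← hij] at hmem
  have hedge : i / 2 = j / 2 := hc.edge_injOn (by simp; omega) (by simp; omega)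
    (hM.eq_of_mem_of_mem (hc.edge_mem _ (by omega)) (hc.edge_mem _ (by omega))
      (inl_mem_chainEdge c i) hmem)
  by_contra hne
  have hloop := hc.edge_mem (i / 2) (by omega)
  rw [chainEdge] at hloop
  rcases (by omega : 2 * (i / 2) = i ∧ 2 * (i / 2) + 1 = j ∨ 2 * (i / 2) = j ∧ 2 * (i / 2) + 1 = i)
    with ⟨h1, h2⟩ | ⟨h1, h2⟩ <;> rw [h2, h1, hij] at hloop <;>
    exact (whisker H).irrefl (hM.1 _ hloop)

theorem apply_one (hc : IsAltChain H M r c) (hr : 0 < r) {b : V} (hb : s(inl (c 0), inl b) ∈ M) :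
    c 1 = b :=
  inl_injective (hM.eq_of_mk_mem_of_mk_mem (hc.edge_mem 0 hr) hb)

end IsAltChain

namespace AltConnected

theorem symm {a b : V} (h : AltConnected H M a b) : AltConnected H M b a := by
  obtain ⟨r, c, hc, hr, rfl, rfl⟩ := h
  exact ⟨r, _, hc.reverse, hr, rfl, by simp⟩

theorem of_mem {a b : V} (h : s(inl a, inl b) ∈ M) : AltConnected H M a b := by
  refine ⟨1, fun i => if i = 0 then a else b, ⟨?_, ?_, ?_⟩, one_pos, rfl, rfl⟩
  · intro k hk
    simpa [show k = 0 by omega, chainEdge] using h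
  · intro k hk
    omega
  · intro k hk l hl _
    simp only [Set.mem_Iio] at hk hl
    omega

theorem ne [Fintype V] (hM : IsMatchingOn (whisker H) Finset.univ M) {a b : V}
    (h : AltConnected H M a b) : a ≠ b := by
  obtain ⟨r, c, hc, hr, rfl, rfl⟩ := h
  exact fun h => absurd (hc.injOn hM (by simp; omega) (by simp; omega) h) (by omega)

end AltConnected

end AltChain

section MatchedPart

variable {V : Type*} {H : SimpleGraph V} {M : Finset (Sym2 (V ⊕ V))}

def matchedPart (H : SimpleGraph V) (M : Finset (Sym2 (V ⊕ V))) : SimpleGraph V where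
  Adj x y := H.Adj x y ∧ inl x ∈ mSupp M ∧ inl y ∈ mSupp M
  symm := ⟨fun _ _ h => ⟨h.1.symm, h.2.2, h.2.1⟩⟩
  loopless := ⟨fun x h => H.loopless.irrefl x h.1⟩

theorem matchedPart_le : matchedPart H M ≤ H := fun _ _ h => h.1

theorem matchedPart_cycle_length_le {v : V} {p : (matchedPart H M).Walk v v} (hp : p.IsCycle) :
    p.length ≤ 2 * M.card := by
  classical
  have hsub : ∀ x ∈ p.support.tail.map inl, x ∈ M.biUnion Sym2.toFinset := by
    simp only [List.mem_map, ← p.map_snd_darts, Finset.mem_biUnion, Sym2.mem_toFinset]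
    rintro _ ⟨_, ⟨d, -, rfl⟩, rfl⟩
    exact d.adj.2.2
  calc p.length = (p.support.tail.map inl).toFinset.card := by
        rw [List.toFinset_card_of_nodup (hp.support_nodup.map inl_injective)]
        simp [SimpleGraph.Walk.length_support]
    _ ≤ (M.biUnion Sym2.toFinset).card := Finset.card_le_card fun x hx => hsub x (by simpa using hx)
    _ ≤ ∑ e ∈ M, e.toFinset.card := Finset.card_biUnion_le
    _ ≤ ∑ _e ∈ M, 2 := Finset.sum_le_sum fun e _ => by rw [Sym2.card_toFinset]; split_ifs <;> omega
    _ = 2 * M.card := by simp [mul_comm]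

/-- A cycle of the matched part uses only matched vertices, so it is too short to be a cycle of
`H` once `2 |M| < girth H`. -/
theorem matchedPart_isAcyclic (h : H.IsAcyclic ∨ 2 * M.card < H.girth) :
    (matchedPart H M).IsAcyclic := by
  intro v p hp
  have hH := hp.mapLe (matchedPart_le (M := M))
  rcases h with h | h
  · exact h _ hH
  · have := H.girth_le_length hH
    have := matchedPart_cycle_length_le hp
    simp only [SimpleGraph.Walk.length_mapLe] at *
    omega

variable [Fintype V] (hM : IsMatchingOn (whisker H) Finset.univ M)
include hM

namespace IsAltChain

variable {r r₁ r₂ : ℕ} {c c₁ c₂ : ℕ → V}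

theorem matchedPart_adj (hc : IsAltChain H M r c) {i : ℕ} (hi : i + 1 < 2 * r) :
    (matchedPart H M).Adj (c i) (c (i + 1)) := by
  refine ⟨?_, hc.inl_mem_mSupp (by omega), hc.inl_mem_mSupp hi⟩
  obtain ⟨k, rfl | rfl⟩ := Nat.even_or_odd' i
  · exact whisker_adj_inl_inl.mp (hM.1 _ (hc.edge_mem k (by omega)))
  · exact hc.adj k (by omega)

theorem reachable_deleteEdges (hc : IsAltChain H M r c) {i : ℕ} (hi : 1 ≤ i) (hi' : i < 2 * r) :
    ((matchedPart H M).deleteEdges {s(c 0, c 1)}).Reachable (c 1) (c i) := by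
  rw [SimpleGraph.reachable_iff_reflTransGen]
  refine (reflTransGen_of_succ_of_le _ (fun k hk => ?_) hi).lift c fun _ _ h => h
  obtain ⟨hk, hki⟩ := Set.mem_Ico.mp hk
  rw [Order.succ_eq_add_one, Function.onFun, SimpleGraph.deleteEdges_adj, Set.mem_singleton_iff,
    Sym2.eq_iff]
  have hinj := hc.injOn hM
  refine ⟨hc.matchedPart_adj hM (by omega), ?_⟩
  rintro (⟨h, -⟩ | ⟨-, h⟩)
  · exact absurd (hinj (by simp; omega) (by simp; omega) h) (by omega)
  · exact absurd (hinj (by simp; omega) (by simp; omega) h) (by omega)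

theorem apply_ne_of_acyclic (hF : (matchedPart H M).IsAcyclic) (h₁ : IsAltChain H M r₁ c₁)
    (h₂ : IsAltChain H M r₂ c₂) (h0 : c₂ 0 = c₁ 1) (h1 : c₂ 1 = c₁ 0) {i j : ℕ} (hi : 1 ≤ i)
    (hi' : i < 2 * r₁) (hj : 1 ≤ j) (hj' : j < 2 * r₂) : c₁ i ≠ c₂ j := by
  intro hij
  have hbridge := SimpleGraph.isAcyclic_iff_forall_adj_isBridge.mp hF
    (h₁.matchedPart_adj hM (i := 0) (by omega))
  apply SimpleGraph.isBridge_iff.mp hbridge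
  have h₂' := h₂.reachable_deleteEdges hM hj hj'
  rw [h0, h1, Sym2.eq_swap] at h₂'
  exact (h₁.reachable_deleteEdges hM (i := i) hi hi').trans (hij ▸ h₂'.symm) |>.symm

theorem glue (hF : (matchedPart H M).IsAcyclic) (h₁ : IsAltChain H M r₁ c₁)
    (h₂ : IsAltChain H M r₂ c₂) (hr₁ : 0 < r₁) (hr₂ : 0 < r₂) (h0 : c₂ 0 = c₁ 1)
    (h1 : c₂ 1 = c₁ 0) :
    ∃ c, IsAltChain H M (r₁ + r₂ - 1) c ∧ c 0 = c₁ (2 * r₁ - 1) ∧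
      c (2 * (r₁ + r₂ - 1) - 1) = c₂ (2 * r₂ - 1) := by
  have hdisj : ∀ k < r₁, ∀ l < r₂ - 1,
      chainEdge (fun i => c₁ (2 * r₁ - 1 - i)) k ≠ chainEdge (fun i => c₂ (i + 2)) l := by
    intro k hk l hl h
    rw [chainEdge_reverse hk, chainEdge_shift] at h
    by_cases hk0 : r₁ - 1 - k = 0
    · have h00 : chainEdge c₁ 0 = chainEdge c₂ 0 := by simp [chainEdge, h0, h1, Sym2.eq_swap]
      rw [hk0, h00] at h
      have := h₂.edge_injOn (by simp; omega) (by simp; omega) h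
      omega
    · have hmem := inl_mem_chainEdge c₁ (2 * (r₁ - 1 - k))
      rw [show 2 * (r₁ - 1 - k) / 2 = r₁ - 1 - k by omega, h, chainEdge, Sym2.mem_iff] at hmem
      rcases hmem with h' | h' <;>
        exact h₁.apply_ne_of_acyclic hM hF h₂ h0 h1 (by omega) (by omega) (by omega) (by omega)
          (inl_injective h')
  have hc := h₁.reverse.append h₂.drop
    (fun _ => by simpa [← h1] using h₂.adj 0 (by omega)) hdisj
  rw [← show r₁ + r₂ - 1 = r₁ + (r₂ - 1) by omega] at hc
  refine ⟨_, hc, by simp [hr₁], ?_⟩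
  split_ifs with h
  · rw [show 2 * r₁ - 1 - (2 * (r₁ + r₂ - 1) - 1) = 0 by omega, ← h1,
      show 2 * r₂ - 1 = 1 by omega]
  · congr 1
    omega

end IsAltChain

theorem AltConnected.trans_of_mem (hF : (matchedPart H M).IsAcyclic) {b b' g f : V}
    (hbb' : s(inl b, inl b') ∈ M) (h₁ : AltConnected H M b' g) (h₂ : AltConnected H M b f) :
    AltConnected H M g f := by
  obtain ⟨r₁, c₁, hc₁, hr₁, h₁0, rfl⟩ := h₁
  obtain ⟨r₂, c₂, hc₂, hr₂, h₂0, rfl⟩ := h₂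
  have h₁1 : c₁ 1 = b := hc₁.apply_one hM hr₁ (by rw [h₁0, Sym2.eq_swap]; exact hbb')
  have h₂1 : c₂ 1 = b' := hc₂.apply_one hM hr₂ (by rw [h₂0]; exact hbb')
  obtain ⟨c, hc, hc0, hc1⟩ :=
    hc₁.glue hM hF hc₂ hr₁ hr₂ (h₂0.trans h₁1.symm) (h₂1.trans h₁0.symm)
  exact ⟨_, c, hc, by omega, hc0, hc1⟩

end MatchedPart

section EvenConnection

variable {V : Type*} [Fintype V] {H : SimpleGraph V} {M : Finset (Sym2 (V ⊕ V))}
  (hM : IsMatchingOn (whisker H) Finset.univ M)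
include hM

/-- A whisker `inr t` can only lie in the edge `s(inl t, inr t)`, and its walk neighbour outside
that edge would have to be `inl t` again. -/
theorem exists_inl_of_evenConnected_walk {u v : V ⊕ V} (hu : u ∉ mSupp M) (hv : v ∉ mSupp M)
    {r : ℕ} {p : ℕ → V ⊕ V} (hp0 : p 0 = u) (hpr : p (2 * r + 1) = v)
    (hadj : ∀ k, k ≤ 2 * r → (whisker H).Adj (p k) (p (k + 1)))
    (hmem : ∀ k, k < r → s(p (2 * k + 1), p (2 * k + 2)) ∈ M)
    (hinj : ∀ k l, k < r → l < r →
      s(p (2 * k + 1), p (2 * k + 2)) = s(p (2 * l + 1), p (2 * l + 2)) → k = l)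
    {j : ℕ} (hj : 1 ≤ j) (hj' : j ≤ 2 * r) : ∃ x, p j = inl x := by
  have hpair : ∀ i, 1 ≤ i → p i ∈ s(p (2 * ((i - 1) / 2) + 1), p (2 * ((i - 1) / 2) + 2)) := by
    intro i hi
    obtain ⟨k, hk⟩ : ∃ k, (i - 1) / 2 = k := ⟨_, rfl⟩
    rw [hk]
    rcases (by omega : i = 2 * k + 1 ∨ i = 2 * k + 2) with rfl | rfl <;> simp
  cases hpj : p j with
  | inl x => exact ⟨x, rfl⟩
  | inr t =>
    exfalso
    set k := (j - 1) / 2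
    have hkr : k < r := by omega
    have htk : inl t ∈ s(p (2 * k + 1), p (2 * k + 2)) := by
      rw [hM.eq_of_inr_mem (hmem k hkr) (hpj ▸ hpair j hj)]
      exact Sym2.mem_mk_left _ _
    obtain ⟨j', hj', hpj'⟩ : ∃ j', (j' = 0 ∨ j' = 2 * r + 1 ∨ 1 ≤ j' ∧ j' ≤ 2 * r ∧
        (j' - 1) / 2 ≠ k) ∧ p j' = inl t := by
      rcases (by omega : j = 2 * k + 1 ∨ j = 2 * k + 2) with h | h
      · exact ⟨j - 1, by omega, by simpa [Nat.sub_add_cancel hj, hpj] using hadj (j - 1) (by omega)⟩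
      · exact ⟨j + 1, by omega, whisker_inr_adj.mp (hpj ▸ hadj j hj')⟩
    rcases hj' with rfl | rfl | ⟨h1, h2, hne⟩
    · exact hu (hp0 ▸ hpj' ▸ mem_mSupp_of_mem_s13 (hmem k hkr) htk)
    · exact hv (hpr ▸ hpj' ▸ mem_mSupp_of_mem_s13 (hmem k hkr) htk)
    · exact hne (hinj _ _ (by omega) hkr (hM.eq_of_mem_of_mem (hmem _ (by omega)) (hmem k hkr)
        (hpj' ▸ hpair j' h1) htk))

theorem evenConnected_whisker_iff {u v : V ⊕ V} (hu : u ∉ mSupp M) (hv : v ∉ mSupp M) :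
    EvenConnected (whisker H) M u v ↔
      ∃ a b, AltConnected H M a b ∧ (whisker H).Adj u (inl a) ∧ (whisker H).Adj (inl b) v := by
  constructor
  · rintro ⟨r, p, hr, hp0, hpr, hadj, hmem, hinj⟩
    set c : ℕ → V := fun i => (p (i + 1)).elim id id
    have hc : ∀ i < 2 * r, inl (c i) = p (i + 1) := fun i hi => by
      obtain ⟨x, hx⟩ := exists_inl_of_evenConnected_walk hM hu hv hp0 hpr hadj hmem hinj
        (j := i + 1) (by omega) (by omega)
      simp [c, hx]
    have hedge : ∀ k < r, chainEdge c k = s(p (2 * k + 1), p (2 * k + 2)) := fun k hk => by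
      rw [chainEdge, hc _ (by omega), hc _ (by omega)]
    refine ⟨c 0, c (2 * r - 1), ⟨r, c, ⟨fun k hk => hedge k hk ▸ hmem k hk, fun k hk => ?_,
      fun k hk l hl h => ?_⟩, hr, rfl, rfl⟩, ?_, ?_⟩
    · rw [← whisker_adj_inl_inl, hc _ (by omega), hc _ (by omega)]
      exact hadj _ (by omega)
    · simp only [Set.mem_Iio] at hk hl
      rw [hedge k hk, hedge l hl] at h
      exact hinj k l hk hl h
    · rw [hc 0 (by omega), ← hp0]
      exact hadj 0 (by omega)
    · rw [hc _ (by omega), Nat.sub_add_cancel (by omega), ← hpr]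
      exact hadj _ le_rfl
  · rintro ⟨a, b, ⟨r, c, hc, hr, rfl, rfl⟩, hu', hv'⟩
    set p : ℕ → V ⊕ V := fun j => if j = 0 then u else if j ≤ 2 * r then inl (c (j - 1)) else v
    have hp0 : p 0 = u := by simp [p]
    have hpr : p (2 * r + 1) = v := by simp [p]
    have hp : ∀ j, 1 ≤ j → j ≤ 2 * r → p j = inl (c (j - 1)) := fun j h1 h2 => by
      simp [p, h2, show j ≠ 0 by omega]
    have hpe : ∀ k < r, s(p (2 * k + 1), p (2 * k + 2)) = chainEdge c k := fun k hk => by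
      rw [hp _ (by omega) (by omega), hp _ (by omega) (by omega), Nat.add_sub_cancel,
        show 2 * k + 2 - 1 = 2 * k + 1 by omega, chainEdge]
    refine ⟨r, p, hr, hp0, hpr, fun k hk => ?_, fun k hk => hpe k hk ▸ hc.edge_mem k hk,
      fun k l hk hl h => hc.edge_injOn hk hl (by rwa [← hpe k hk, ← hpe l hl])⟩
    rcases (by omega : k = 0 ∨ k = 2 * r ∨ 1 ≤ k ∧ k < 2 * r) with rfl | rfl | ⟨hk1, hk2⟩
    · rwa [hp0, hp 1 le_rfl (by omega)]
    · rwa [hpr, hp _ (by omega) le_rfl]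
    · rw [hp k hk1 hk2.le, hp (k + 1) (by omega) hk2, Nat.add_sub_cancel, whisker_adj_inl_inl]
      obtain ⟨m, rfl | rfl⟩ := Nat.even_or_odd' k
      · rw [show 2 * m - 1 = 2 * (m - 1) + 1 by omega, show 2 * m = 2 * (m - 1) + 2 by omega]
        exact hc.adj _ (by omega)
      · rw [Nat.add_sub_cancel, ← whisker_adj_inl_inl]
        exact hM.1 _ (hc.edge_mem m (by omega))

end EvenConnection

section EvenConnGraph

variable {V : Type*} {H : SimpleGraph V} {M : Finset (Sym2 (V ⊕ V))}

theorem AltConnected.inl_mem_mSupp_right {a b : V} (h : AltConnected H M a b) :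
    inl b ∈ mSupp M := by
  obtain ⟨r, c, hc, hr, -, rfl⟩ := h
  exact hc.inl_mem_mSupp (by omega)

theorem evenConnGraph_adj_inl_inr {a : V} (ha : inl a ∉ mSupp M) (ha' : inr a ∉ mSupp M) :
    (evenConnGraph (whisker H) M).Adj (inl a) (inr a) :=
  ⟨inl_ne_inr, ha, ha', .inl (whisker_adj_inr.mpr rfl)⟩

variable [Fintype V] (hM : IsMatchingOn (whisker H) Finset.univ M)
include hM

theorem evenConnGraph_whisker_adj {x y : V ⊕ V} :
    (evenConnGraph (whisker H) M).Adj x y ↔ x ≠ y ∧ x ∉ mSupp M ∧ y ∉ mSupp M ∧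
      ((whisker H).Adj x y ∨
        ∃ a b, AltConnected H M a b ∧ (whisker H).Adj x (inl a) ∧ (whisker H).Adj (inl b) y) := by
  refine ⟨fun ⟨hne, hx, hy, h⟩ => ⟨hne, hx, hy, ?_⟩, fun ⟨hne, hx, hy, h⟩ => ⟨hne, hx, hy, ?_⟩⟩
  · rw [evenConnected_whisker_iff hM hx hy, evenConnected_whisker_iff hM hy hx] at h
    rcases h with h | h | ⟨a, b, hab, hya, hbx⟩
    · exact .inl h
    · exact .inr h
    · exact .inr ⟨b, a, hab.symm, hbx.symm, hya.symm⟩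
  · rw [evenConnected_whisker_iff hM hx hy]
    exact h.imp_right .inl

theorem evenConnGraph_adj_inr_inr {a b : V} :
    (evenConnGraph (whisker H) M).Adj (inr a) (inr b) ↔
      inr a ∉ mSupp M ∧ inr b ∉ mSupp M ∧ AltConnected H M a b := by
  simp only [evenConnGraph_whisker_adj hM, ne_eq, inr.injEq, whisker_inr_adj, whisker_adj_inr,
    inl.injEq, reduceCtorEq, false_or, exists_eq_right_right, exists_eq_right]
  exact ⟨fun ⟨_, h⟩ => h, fun h => ⟨h.2.2.ne hM, h⟩⟩

theorem eq_inl_of_evenConnGraph_adj_inr {a : V} (ha : inl a ∉ mSupp M) {z : V ⊕ V}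
    (h : (evenConnGraph (whisker H) M).Adj z (inr a)) : z = inl a := by
  rw [evenConnGraph_whisker_adj hM] at h
  rcases h.2.2.2 with h | ⟨a', b', hab, -, hb⟩
  · exact whisker_adj_inr.mp h
  · obtain rfl : b' = a := inl_injective (whisker_adj_inr.mp hb)
    exact absurd hab.inl_mem_mSupp_right ha

theorem evenConnGraph_adj_inr_of_mate (hF : (matchedPart H M).IsAcyclic) {u : V ⊕ V}
    {b b' f : V} (hbb' : s(inl b, inl b') ∈ M) (hbf : AltConnected H M b f)
    (hf : inr f ∉ mSupp M) (hu : (evenConnGraph (whisker H) M).Adj u (inr b')) :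
    (evenConnGraph (whisker H) M).Adj u (inr f) := by
  rw [evenConnGraph_whisker_adj hM] at hu ⊢
  obtain ⟨-, hu, -, h⟩ := hu
  rcases h with h | ⟨a, b₁, hab₁, hua, hb₁⟩
  · exact absurd (whisker_adj_inr.mp h ▸ mem_mSupp_of_mem_s13 hbb' (Sym2.mem_mk_right _ _)) hu
  · obtain rfl : b₁ = b' := inl_injective (whisker_adj_inr.mp hb₁)
    have haf := hab₁.symm.trans_of_mem hM hF hbb' hbf
    refine ⟨?_, hu, hf, .inr ⟨a, f, haf, hua, whisker_adj_inr.mpr rfl⟩⟩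
    rintro rfl
    exact haf.ne hM (inl_injective (whisker_inr_adj.mp hua))

end EvenConnGraph

section Admissible

variable {V : Type*} {H : SimpleGraph V} {M : Finset (Sym2 (V ⊕ V))}

/-- The vertex sets met in the decomposition, starting from all unmatched vertices. -/
structure IsAdmissible (H : SimpleGraph V) (M : Finset (Sym2 (V ⊕ V))) (T : Finset (V ⊕ V)) :
    Prop where
  not_mem_mSupp : ∀ z ∈ T, z ∉ mSupp M
  inr_mem : ∀ a, inl a ∈ T → inr a ∈ T
  inr_mem_of_mate : ∀ a b f, s(inl a, inl b) ∈ M → AltConnected H M a f → inr a ∈ T →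
    inr f ∈ T → inr b ∈ T

open Classical in
theorem isAdmissible_unmatched [Fintype V] (hM : IsMatchingOn (whisker H) Finset.univ M) :
    IsAdmissible H M {v | v ∉ mSupp M} where
  not_mem_mSupp z hz := (Finset.mem_filter.mp hz).2
  inr_mem a ha := by
    simpa using mt hM.inl_mem_mSupp_of_inr_mem (by simpa using ha)
  inr_mem_of_mate a b _ hab _ _ _ := by
    simpa using hM.inr_not_mem_mSupp (by rwa [Sym2.eq_swap] at hab)

variable [DecidableEq V] {T : Finset (V ⊕ V)} {u : V ⊕ V}

namespace IsAdmissible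

theorem erase (hT : IsAdmissible H M T) (hinr : ∀ a, inl a ∈ T → inl a ≠ u → inr a ≠ u)
    (hmate : ∀ b b' f, s(inl b, inl b') ∈ M → AltConnected H M b f → inr f ∈ T →
      inr b' = u → inr f = u) :
    IsAdmissible H M (T.erase u) where
  not_mem_mSupp z hz := hT.not_mem_mSupp z (Finset.mem_of_mem_erase hz)
  inr_mem a ha := by
    obtain ⟨hne, ha⟩ := Finset.mem_erase.mp ha
    exact Finset.mem_erase.mpr ⟨hinr a ha hne, hT.inr_mem a ha⟩
  inr_mem_of_mate a b f hab haf ha hf := by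
    obtain ⟨hfu, hf⟩ := Finset.mem_erase.mp hf
    exact Finset.mem_erase.mpr ⟨fun h => hfu (hmate a b f hab haf hf h),
      hT.inr_mem_of_mate a b f hab haf (Finset.mem_of_mem_erase ha) hf⟩

variable [Fintype V] (hM : IsMatchingOn (whisker H) Finset.univ M)
  (hF : (matchedPart H M).IsAcyclic)
include hM hF

theorem link (hT : IsAdmissible H M T)
    (hinr : ∀ a, inl a ∈ T → inl a ≠ u →
      inr a ≠ u ∧ ¬ (evenConnGraph (whisker H) M).Adj u (inr a))
    (hmate : ∀ b b' f, s(inl b, inl b') ∈ M → AltConnected H M b f → inr f ∈ T →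
      inr b' = u → inr f = u) :
    IsAdmissible H M (outsideClosedNbhd (evenConnGraph (whisker H) M) T u) where
  not_mem_mSupp z hz := hT.not_mem_mSupp z (mem_outsideClosedNbhd.mp hz).1
  inr_mem a ha := by
    obtain ⟨ha, hne, -⟩ := mem_outsideClosedNbhd.mp ha
    exact mem_outsideClosedNbhd.mpr ⟨hT.inr_mem a ha, hinr a ha hne⟩
  inr_mem_of_mate a b f hab haf ha hf := by
    obtain ⟨hf, hfu, hfadj⟩ := mem_outsideClosedNbhd.mp hf
    refine mem_outsideClosedNbhd.mpr ⟨hT.inr_mem_of_mate a b f hab haf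
      (mem_outsideClosedNbhd.mp ha).1 hf, fun h => hfu (hmate a b f hab haf hf h), fun h => ?_⟩
    exact hfadj (evenConnGraph_adj_inr_of_mate hM hF hab haf (hT.not_mem_mSupp _ hf) h)

theorem exists_shedding_of_inl_mem (hT : IsAdmissible H M T) {a : V} (ha : inl a ∈ T) :
    ∃ u ∈ T, HasDominatedNeighbor (evenConnGraph (whisker H) M) T u ∧
      IsAdmissible H M (T.erase u) ∧
      IsAdmissible H M (outsideClosedNbhd (evenConnGraph (whisker H) M) T u) := by
  have hinr : ∀ b, inl b ∈ T → inl b ≠ inl a →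
      inr b ≠ inl a ∧ ¬ (evenConnGraph (whisker H) M).Adj (inl a) (inr b) := fun b hb hne =>
    ⟨inr_ne_inl, fun h => hne (eq_inl_of_evenConnGraph_adj_inr hM (hT.not_mem_mSupp _ hb) h).symm⟩
  have hmate : ∀ b b' f, s(inl b, inl b') ∈ M → AltConnected H M b f → inr f ∈ T →
      inr b' = inl a → inr f = inl a := fun _ _ _ _ _ _ h => absurd h inr_ne_inl
  refine ⟨inl a, ha, ⟨inr a, hT.inr_mem a ha, ?_, fun z _ hz => .inl ?_⟩,
    hT.erase (fun b hb hne => (hinr b hb hne).1) hmate, hT.link hM hF hinr hmate⟩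
  · exact evenConnGraph_adj_inl_inr (hT.not_mem_mSupp _ ha) (hT.not_mem_mSupp _ (hT.inr_mem a ha))
  · exact eq_inl_of_evenConnGraph_adj_inr hM (hT.not_mem_mSupp _ ha) hz

theorem exists_shedding_of_forall_not_inl_mem (hT : IsAdmissible H M T)
    (hinl : ∀ a, inl a ∉ T)
    (hE : ∃ x ∈ T, ∃ y ∈ T, (evenConnGraph (whisker H) M).Adj x y) :
    ∃ u ∈ T, HasDominatedNeighbor (evenConnGraph (whisker H) M) T u ∧
      IsAdmissible H M (T.erase u) ∧
      IsAdmissible H M (outsideClosedNbhd (evenConnGraph (whisker H) M) T u) := by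
  classical
  have hT_inr : ∀ x ∈ T, ∃ a, x = inr a := fun x hx => by
    cases x with
    | inl a => exact absurd hx (hinl a)
    | inr a => exact ⟨a, rfl⟩
  obtain ⟨x, hx, y, hy, hxy⟩ := hE
  obtain ⟨a, rfl⟩ := hT_inr x hx
  obtain ⟨b, rfl⟩ := hT_inr y hy
  obtain ⟨-, -, r₀, c₀, hc₀, hr₀, rfl, rfl⟩ := (evenConnGraph_adj_inr_inr hM).mp hxy
  set P : ℕ → Prop :=
    fun n => ∃ c, IsAltChain H M n c ∧ 0 < n ∧ inr (c 0) ∈ T ∧ inr (c (2 * n - 1)) ∈ T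
  have hPle : ∀ n, P n → n ≤ M.card := fun n ⟨_, hc, _⟩ => hc.le_card
  have hP₀ : P r₀ := ⟨c₀, hc₀, hr₀, hx, hy⟩
  obtain ⟨c, hc, hr, hc0, hcr⟩ := Nat.findGreatest_spec (hPle _ hP₀) hP₀
  set r := Nat.findGreatest P M.card
  have hPmax : ∀ n, P n → n ≤ r := fun n hn => Nat.le_findGreatest (hPle n hn) hn
  set z := c (2 * r - 1)
  set z' := c (2 * r - 2)
  have hz'z : s(inl z', inl z) ∈ M := by
    have := hc.edge_mem (r - 1) (by omega)
    rwa [chainEdge, show 2 * (r - 1) = 2 * r - 2 by omega,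
      show 2 * r - 2 + 1 = 2 * r - 1 by omega] at this
  have hleaf : ∀ f, AltConnected H M z' f → inr f ∈ T → f = z := by
    rintro f ⟨r', c', hc', hr', h0, rfl⟩ hf
    have h1 : c' 1 = z := hc'.apply_one hM hr' (h0 ▸ hz'z)
    obtain ⟨c'', hc'', h''0, h''1⟩ := hc.reverse.glue hM hF hc' hr hr'
      (by simp only [h0, z']; congr 1) (by simpa using h1)
    have := hPmax _ ⟨c'', hc'', by omega, by simpa [h''0] using hc0, h''1 ▸ hf⟩
    rw [← h1, show 2 * r' - 1 = 1 by omega]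
  have hz'T : inr z' ∈ T := hT.inr_mem_of_mate z z' (c 0) (by rwa [Sym2.eq_swap])
    (AltConnected.symm ⟨r, c, hc, hr, rfl, rfl⟩) hcr hc0
  have hmate : ∀ b b' f, s(inl b, inl b') ∈ M → AltConnected H M b f → inr f ∈ T →
      (inr b' : V ⊕ V) = inr z → (inr f : V ⊕ V) = inr z := by
    rintro b b' f hbb' hbf hf h
    obtain rfl := inr_injective h
    obtain rfl : b = z' := inl_injective (hM.eq_of_mk_mem_of_mk_mem
      (by rwa [Sym2.eq_swap]) (by rwa [Sym2.eq_swap]))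
    rw [hleaf f hbf hf]
  refine ⟨inr z, hcr, ⟨inr z', hz'T, ?_, fun y hy hyz' => .inl ?_⟩,
    hT.erase (fun a ha => absurd ha (hinl a)) hmate,
    hT.link hM hF (fun a ha => absurd ha (hinl a)) hmate⟩
  · exact (evenConnGraph_adj_inr_inr hM).mpr ⟨hT.not_mem_mSupp _ hcr,
      hT.not_mem_mSupp _ hz'T, (AltConnected.of_mem hz'z).symm⟩
  · obtain ⟨g, rfl⟩ := hT_inr y hy
    rw [hleaf g ((evenConnGraph_adj_inr_inr hM).mp hyz').2.2.symm hy]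

theorem exists_shedding (hT : IsAdmissible H M T)
    (hE : ∃ x ∈ T, ∃ y ∈ T, (evenConnGraph (whisker H) M).Adj x y) :
    ∃ u ∈ T, HasDominatedNeighbor (evenConnGraph (whisker H) M) T u ∧
      IsAdmissible H M (T.erase u) ∧
      IsAdmissible H M (outsideClosedNbhd (evenConnGraph (whisker H) M) T u) := by
  by_cases h : ∃ a, inl a ∈ T
  · obtain ⟨a, ha⟩ := h
    exact hT.exists_shedding_of_inl_mem hM hF ha
  · exact hT.exists_shedding_of_forall_not_inl_mem hM hF (fun a ha => h ⟨a, ha⟩) hE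

end IsAdmissible

end Admissible

theorem independenceComplex_evenConnGraph_vertexDecomposable_general
    {V : Type*} [Fintype V] [DecidableEq V] (H : SimpleGraph V) (q ν : ℕ)
    (M : Finset (Sym2 (V ⊕ V))) (hM : IsMatchingOn (whisker H) Finset.univ M)
    (hcard : M.card = q)
    (hrange : (∃ m : ℕ, H.girth = (m : ℕ∞) ∧ 2 * q < m) ∨ (H.IsAcyclic ∧ q ≤ ν)) :
    VertexDecomposable (fun F : Finset (V ⊕ V) =>
      (∀ v ∈ F, v ∉ mSupp M) ∧
      ∀ a ∈ F, ∀ b ∈ F, ¬ (evenConnGraph (whisker H) M).Adj a b) := by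
  classical
  have hF : (matchedPart H M).IsAcyclic := by
    refine matchedPart_isAcyclic ?_
    rcases hrange with ⟨m, hm, hqm⟩ | ⟨hH, -⟩
    · exact .inr (by rw [hcard, Nat.cast_inj.mp hm]; exact hqm)
    · exact .inl hH
  convert vertexDecomposable_inducedIndepComplex (IsAdmissible H M)
    (fun T hT hE => hT.exists_shedding hM hF hE) (isAdmissible_unmatched hM) using 2 with F
  simp [inducedIndepComplex, Finset.subset_iff]

/-- for pairwise disjoint edges `e₁,…,e_q` of `G = W(H)` with
`q < girth(H)/2` (or `q ≤ ν(G)` when `H` is acyclic), the independence complex of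
the even-connection graph `G^{e₁⋯e_q}` is vertex decomposable. -/
theorem independenceComplex_evenConnGraph_vertexDecomposable
    {V : Type*} [Fintype V] [DecidableEq V] (H : SimpleGraph V) (q ν : ℕ)
    (hν₁ : ∃ M : Finset (Sym2 (V ⊕ V)),
      IsMatchingOn (whisker H) Finset.univ M ∧ M.card = ν)
    (hν₂ : ∀ M : Finset (Sym2 (V ⊕ V)),
      IsMatchingOn (whisker H) Finset.univ M → M.card ≤ ν)
    (M : Finset (Sym2 (V ⊕ V))) (hM : IsMatchingOn (whisker H) Finset.univ M)
    (hcard : M.card = q) (hq : 1 ≤ q)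
    (hrange : (∃ m : ℕ, H.girth = (m : ℕ∞) ∧ 2 * q < m) ∨ (H.IsAcyclic ∧ q ≤ ν)) :
    VertexDecomposable (fun F : Finset (V ⊕ V) =>
      (∀ v ∈ F, v ∉ mSupp M) ∧
      ∀ a ∈ F, ∀ b ∈ F, ¬ (evenConnGraph (whisker H) M).Adj a b) :=
  independenceComplex_evenConnGraph_vertexDecomposable_general H q ν M hM hcard hrange
end

section
/- Let H be a graph on n ≥ 2 vertices whose girth is not 3 (possibly infinite), and let G = W(H). Then MF^{n−1}(G) is pure, and a set of the form V(G) \ {u,v} is a facet of MF^{n−1}(G) if and only if one of the following holds: (1) u,v ∈ V(H) with u ≠ v; (2) {u,v} = {y_i,y_j} with {x_i,x_j} ∉ E(H); (3) {u,v} = {x_i,y_j} with i ≠ j. -/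
variable {V : Type*}

/-! The whiskers `x_c y_c` inside a face `F` of `MF^{n-1}(W(H))` form a matching, so `F` misses a
vertex over at least two indices. Conversely, if `F` misses a vertex over each of two indices
`a ≠ b`, and does not contain both `x_a, x_b` when `a ~ b`, then `{x_c : c ≠ a, b}` is a vertex
cover of `W(H)[F]` of size `n - 2`, so `F` is a face. Every face has two such indices: otherwise
the indices it misses form a clique of `H`, of size at most 2 since the girth is not 3, and an edge
`x_a x_b` completes the whisker matching to size `n - 1`. So every facet is `V(G) \ {u, v}`. -/

open Finset SimpleGraph

lemma SimpleGraph.girth_eq_three_of_adj {H : SimpleGraph V} {a b c : V}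
    (hab : H.Adj a b) (hbc : H.Adj b c) (hca : H.Adj c a) : H.girth = 3 := by
  classical
  have hK : completeGraph (Fin 3) ⊑ H := (not_cliqueFree_iff_top_isContained 3).1
    fun h => h {a, b, c} (is3Clique_triple_iff.2 ⟨hab, hca.symm, hbc⟩)
  have : H.egirth = 3 :=
    le_antisymm (hK.egirth_le.trans (egirth_top (by simp)).le) three_le_egirth
  simp [girth, this]

namespace IsMatchingOn

variable {G : SimpleGraph V} {S : Finset V} {M : Finset (Sym2 V)}

lemma card_le_card_of_cover (hM : IsMatchingOn G S M) {C : Finset V}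
    (hC : ∀ x ∈ S, ∀ y ∈ S, G.Adj x y → x ∈ C ∨ y ∈ C) : M.card ≤ C.card := by
  obtain ⟨hedge, hsupp, hdisj⟩ := hM
  refine card_le_card_of_forall_subsingleton (fun e c => c ∈ e) (fun e he => ?_) ?_
  · induction e using Sym2.ind with
    | _ x y =>
      rcases hC x (hsupp _ he x (Sym2.mem_mk_left x y)) y (hsupp _ he y (Sym2.mem_mk_right x y))
        (hedge _ he) with h | h
      · exact ⟨x, h, Sym2.mem_mk_left x y⟩
      · exact ⟨y, h, Sym2.mem_mk_right x y⟩
  · rintro c - e ⟨he, hce⟩ e' ⟨he', hce'⟩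
    by_contra hne
    exact hdisj e he e' he' hne c hce hce'

lemma insert [DecidableEq V] (hM : IsMatchingOn G S M) {e : Sym2 V} (he : e ∈ G.edgeSet)
    (heS : ∀ v ∈ e, v ∈ S) (hfree : ∀ e' ∈ M, ∀ v ∈ e, v ∉ e') :
    IsMatchingOn G S (insert e M) := by
  obtain ⟨hedge, hsupp, hdisj⟩ := hM
  refine ⟨?_, ?_, ?_⟩ <;> simp only [mem_insert, forall_eq_or_imp]
  · exact ⟨he, hedge⟩
  · exact ⟨heS, hsupp⟩
  · refine ⟨⟨fun h => (h rfl).elim, fun e' he' _ v hv => hfree e' he' v hv⟩,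
      fun e' he' => ⟨?_, hdisj e' he'⟩⟩
    rintro - v hv hve
    exact hfree e' he' v hve hv

end IsMatchingOn

section Whisker

variable [DecidableEq V] {H : SimpleGraph V} {S : Finset (V ⊕ V)}

lemma isMatchingOn_whisker_image {T : Finset V}
    (hT : ∀ a ∈ T, Sum.inl a ∈ S ∧ Sum.inr a ∈ S) :
    IsMatchingOn (whisker H) S (T.image fun a => s(Sum.inl a, Sum.inr a)) := by
  refine ⟨?_, ?_, ?_⟩
  · simp only [mem_image, forall_exists_index, and_imp]
    rintro _ a - rfl
    exact Or.inr ⟨a, Or.inl ⟨rfl, rfl⟩⟩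
  · simp only [mem_image, forall_exists_index, and_imp]
    rintro _ a ha rfl v hv
    rcases Sym2.mem_iff.1 hv with rfl | rfl
    exacts [(hT a ha).1, (hT a ha).2]
  · simp only [mem_image, forall_exists_index, and_imp]
    rintro _ a - rfl _ b - rfl hne v hv hv'
    have hab : a ≠ b := by rintro rfl; exact hne rfl
    rcases Sym2.mem_iff.1 hv with rfl | rfl <;> simp [hab] at hv'

lemma card_whisker_image (T : Finset V) :
    (T.image fun a => (s(Sum.inl a, Sum.inr a) : Sym2 (V ⊕ V))).card = T.card :=
  card_image_of_injective _ fun a b h => by simpa using h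

lemma not_mfFace_whisker_of_le_card {q : ℕ} (T : Finset V)
    (hT : ∀ a ∈ T, Sum.inl a ∈ S ∧ Sum.inr a ∈ S) (hq : q ≤ T.card) :
    ¬ MFFace (whisker H) q S := by
  obtain ⟨T', hT', rfl⟩ := exists_subset_card_eq hq
  exact fun hface => hface ⟨_, isMatchingOn_whisker_image fun a ha => hT a (hT' ha),
    card_whisker_image T'⟩

variable [Fintype V]

lemma not_mfFace_whisker_of_forall_ne (a : V)
    (hS : ∀ c, c ≠ a → Sum.inl c ∈ S ∧ Sum.inr c ∈ S) :
    ¬ MFFace (whisker H) (Fintype.card V - 1) S :=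
  not_mfFace_whisker_of_le_card (univ.erase a) (fun c hc => hS c (ne_of_mem_erase hc))
    (by simp [card_erase_of_mem])

lemma not_mfFace_whisker_of_adj {a b : V} (hab : H.Adj a b)
    (ha : Sum.inl a ∈ S) (hb : Sum.inl b ∈ S)
    (hS : ∀ c, c ≠ a → c ≠ b → Sum.inl c ∈ S ∧ Sum.inr c ∈ S) :
    ¬ MFFace (whisker H) (Fintype.card V - 1) S := by
  set T : Finset V := univ \ {a, b}
  have hT : ∀ c ∈ T, Sum.inl c ∈ S ∧ Sum.inr c ∈ S := fun c hc => by
    simp only [T, mem_sdiff, mem_insert, mem_singleton, not_or] at hc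
    exact hS c hc.2.1 hc.2.2
  have hM := (isMatchingOn_whisker_image hT).insert (e := s(Sum.inl a, Sum.inl b))
    (Or.inl ⟨a, b, rfl, rfl, hab⟩) (by simp [ha, hb]) (by
      simp only [T, mem_image, mem_sdiff, mem_insert, mem_singleton]
      rintro _ ⟨c, hc, rfl⟩
      simp only [mem_univ, true_and, not_or] at hc
      simp [Ne.symm hc.1, Ne.symm hc.2])
  rintro hface
  refine hface ⟨_, hM, ?_⟩
  rw [card_insert_of_notMem (by simp), card_whisker_image, card_sdiff_of_subset (subset_univ _),
    card_univ, card_pair hab.ne]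
  have := card_le_univ ({a, b} : Finset V)
  rw [card_pair hab.ne] at this
  omega

lemma mfFace_whisker_of_two_missing {a b : V} (hab : a ≠ b)
    (ha : ¬ (Sum.inl a ∈ S ∧ Sum.inr a ∈ S)) (hb : ¬ (Sum.inl b ∈ S ∧ Sum.inr b ∈ S))
    (hadj : H.Adj a b → Sum.inl a ∉ S ∨ Sum.inl b ∉ S) :
    MFFace (whisker H) (Fintype.card V - 1) S := by
  rintro ⟨M, hM, hcard⟩
  set C : Finset (V ⊕ V) := ({a, b}ᶜ : Finset V).image Sum.inl
  have hC : ∀ c, Sum.inl c ∈ C ↔ c ≠ a ∧ c ≠ b := by simp [C]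
  have hcover : ∀ x ∈ S, ∀ y ∈ S, (whisker H).Adj x y → x ∈ C ∨ y ∈ C := by
    rintro x hx y hy (⟨c, d, rfl, rfl, hcd⟩ | ⟨c, ⟨rfl, rfl⟩ | ⟨rfl, rfl⟩⟩)
    · by_contra h
      simp only [hC, not_or, not_and_or, not_not] at h
      obtain ⟨rfl | rfl, rfl | rfl⟩ := h
      · exact hcd.ne rfl
      · exact (hadj hcd).elim (· hx) (· hy)
      · exact (hadj hcd.symm).elim (· hy) (· hx)
      · exact hcd.ne rfl
    · refine Or.inl ((hC c).2 ⟨?_, ?_⟩) <;> rintro rfl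
      exacts [ha ⟨hx, hy⟩, hb ⟨hx, hy⟩]
    · refine Or.inr ((hC c).2 ⟨?_, ?_⟩) <;> rintro rfl
      exacts [ha ⟨hy, hx⟩, hb ⟨hy, hx⟩]
  have hM_le := hM.card_le_card_of_cover hcover
  have hpair := card_le_univ ({a, b} : Finset V)
  rw [card_image_of_injective _ Sum.inl_injective, card_compl, card_pair hab] at hM_le
  rw [card_pair hab] at hpair
  omega

lemma isFacet_mfFace_whisker_compl_pair_iff {u v : V ⊕ V} :
    IsFacet (MFFace (whisker H) (Fintype.card V - 1)) (univ \ {u, v}) ↔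
      MFFace (whisker H) (Fintype.card V - 1) (univ \ {u, v}) := by
  refine ⟨And.left, fun hface => ⟨hface, fun S hS hsub => ?_⟩⟩
  by_contra hne
  obtain ⟨w, hw⟩ : ∃ w, ∀ y, y ≠ w → y ∈ S := by
    obtain ⟨x, hxS, hx⟩ := exists_of_ssubset (hsub.ssubset_of_ne hne)
    have hmem : ∀ y, y ≠ u → y ≠ v → y ∈ S := fun y hyu hyv => hsub (by simp [hyu, hyv])
    rcases (by simpa [or_iff_not_imp_left] using hx : x = u ∨ x = v) with rfl | rfl
    · exact ⟨v, fun y hyv => if hyx : y = x then hyx ▸ hxS else hmem y hyx hyv⟩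
    · exact ⟨u, fun y hyu => if hyx : y = x then hyx ▸ hxS else hmem y hyu hyx⟩
  cases w with
  | inl a | inr a =>
    exact not_mfFace_whisker_of_forall_ne a
      (fun c hc => ⟨hw _ (by simp [hc]), hw _ (by simp [hc])⟩) hS

lemma mfFace_whisker_compl_pair_iff {u v : V ⊕ V} (huv : u ≠ v) :
    MFFace (whisker H) (Fintype.card V - 1) (univ \ {u, v}) ↔
      (∃ a b : V, u = Sum.inl a ∧ v = Sum.inl b) ∨
      (∃ a b : V, u = Sum.inr a ∧ v = Sum.inr b ∧ ¬ H.Adj a b) ∨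
      (∃ a b : V, a ≠ b ∧
        ((u = Sum.inl a ∧ v = Sum.inr b) ∨ (u = Sum.inr b ∧ v = Sum.inl a))) := by
  rcases u with a | a <;> rcases v with b | b
  · have hab : a ≠ b := by rintro rfl; exact huv rfl
    exact iff_of_true (mfFace_whisker_of_two_missing hab (by simp) (by simp) (by simp))
      (by simp)
  · by_cases hab : a = b
    · subst hab
      exact iff_of_false (not_mfFace_whisker_of_forall_ne a (by simp_all)) (by simp)
    · exact iff_of_true (mfFace_whisker_of_two_missing hab (by simp) (by simp) (by simp))
        (by simp [hab])
  · by_cases hab : a = b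
    · subst hab
      exact iff_of_false (not_mfFace_whisker_of_forall_ne a (by simp_all)) (by simp)
    · exact iff_of_true (mfFace_whisker_of_two_missing hab (by simp) (by simp) (by simp))
        (by simp [Ne.symm hab])
  · have hab : a ≠ b := by rintro rfl; exact huv rfl
    by_cases hadj : H.Adj a b
    · exact iff_of_false (not_mfFace_whisker_of_adj hadj (by simp) (by simp) (by simp_all))
        (by simp [hadj])
    · exact iff_of_true (mfFace_whisker_of_two_missing hab (by simp) (by simp)
        (by simp [hadj])) (by simp [hadj])

lemma exists_two_missing_of_mfFace_whisker (hgirth : H.girth ≠ 3)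
    (hface : MFFace (whisker H) (Fintype.card V - 1) S) :
    ∃ a b, a ≠ b ∧ ¬ (Sum.inl a ∈ S ∧ Sum.inr a ∈ S) ∧
      ¬ (Sum.inl b ∈ S ∧ Sum.inr b ∈ S) ∧
      (H.Adj a b → Sum.inl a ∉ S ∨ Sum.inl b ∉ S) := by
  set A : Finset V := {a | ¬ (Sum.inl a ∈ S ∧ Sum.inr a ∈ S)}
  have hA : ∀ {a}, a ∈ A ↔ ¬ (Sum.inl a ∈ S ∧ Sum.inr a ∈ S) := by simp [A]
  by_contra h
  have hclique :
      ∀ a ∈ A, ∀ b ∈ A, a ≠ b → H.Adj a b ∧ Sum.inl a ∈ S ∧ Sum.inl b ∈ S := by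
    intro a ha b hb hab
    by_contra hnot
    exact h ⟨a, b, hab, hA.1 ha, hA.1 hb, fun hadj => by tauto⟩
  have hA_ge : 2 ≤ A.card := by
    by_contra! hsmall
    refine not_mfFace_whisker_of_le_card Aᶜ (fun c hc => by simpa [hA] using hc) ?_ hface
    rw [card_compl]
    omega
  have hA_le : A.card ≤ 2 := by
    by_contra! hbig
    obtain ⟨a, ha, b, hb, c, hc, hab, hac, hbc⟩ := two_lt_card.1 hbig
    exact hgirth <| girth_eq_three_of_adj (hclique a ha b hb hab).1 (hclique b hb c hc hbc).1
      (hclique c hc a ha (Ne.symm hac)).1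
  obtain ⟨a, b, hab, hAab⟩ := card_eq_two.1 (le_antisymm hA_le hA_ge)
  obtain ⟨hadj, ha, hb⟩ := hclique a (by simp [hAab]) b (by simp [hAab]) hab
  refine not_mfFace_whisker_of_adj hadj ha hb (fun c hca hcb => ?_) hface
  simpa [hA] using (by simp [hAab, hca, hcb] : c ∉ A)

lemma card_eq_of_isFacet_mfFace_whisker (hgirth : H.girth ≠ 3) {F : Finset (V ⊕ V)}
    (hF : IsFacet (MFFace (whisker H) (Fintype.card V - 1)) F) :
    F.card = 2 * Fintype.card V - 2 := by
  obtain ⟨hface, hmax⟩ := hF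
  obtain ⟨a, b, hab, ha, hb, hadj⟩ := exists_two_missing_of_mfFace_whisker hgirth hface
  set u : V ⊕ V := if Sum.inl a ∈ F then Sum.inr a else Sum.inl a
  set v : V ⊕ V := if Sum.inl b ∈ F then Sum.inr b else Sum.inl b
  have hu : u ∉ F := by unfold u; split_ifs <;> tauto
  have hv : v ∉ F := by unfold v; split_ifs <;> tauto
  have huv : u ≠ v := by unfold u v; split_ifs <;> simp [hab]
  have hface' : MFFace (whisker H) (Fintype.card V - 1) (univ \ {u, v}) := by
    refine mfFace_whisker_of_two_missing hab ?_ ?_ ?_ <;> unfold u v <;> split_ifs <;> simp_all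
  have hF : F = univ \ {u, v} := hmax _ hface' fun x hx => by
    simp only [mem_sdiff, mem_univ, mem_insert, mem_singleton, true_and]
    rintro (rfl | rfl) <;> contradiction
  rw [hF, card_sdiff_of_subset (subset_univ _), card_pair huv, card_univ, Fintype.card_sum]
  omega

end Whisker

theorem facets_of_top_minus_one_mfComplex_general
    {V : Type*} [Fintype V] [DecidableEq V] (H : SimpleGraph V)
    (n : ℕ) (hn : Fintype.card V = n)
    (hgirth : H.girth ≠ 3) :
    (∀ F : Finset (V ⊕ V), IsFacet (MFFace (whisker H) (n - 1)) F →
      F.card = 2 * n - 2) ∧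
    (∀ u v : V ⊕ V, u ≠ v →
      (IsFacet (MFFace (whisker H) (n - 1)) (Finset.univ \ {u, v}) ↔
        (∃ a b : V, u = Sum.inl a ∧ v = Sum.inl b) ∨
        (∃ a b : V, u = Sum.inr a ∧ v = Sum.inr b ∧ ¬ H.Adj a b) ∨
        (∃ a b : V, a ≠ b ∧
          ((u = Sum.inl a ∧ v = Sum.inr b) ∨ (u = Sum.inr b ∧ v = Sum.inl a))))) := by
  subst hn
  exact ⟨fun F hF => card_eq_of_isFacet_mfFace_whisker hgirth hF, fun u v huv =>
    isFacet_mfFace_whisker_compl_pair_iff.trans (mfFace_whisker_compl_pair_iff huv)⟩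

/-- if `H` has `n ≥ 2` vertices and girth ≠ 3, then `MF^{n-1}(W(H))`
is pure (every facet has cardinality `2n - 2`), and `V(G) \ {u,v}` is a facet iff
(1) both `u, v` lie in `V(H)`, or (2) `u, v` are whisker vertices `y_i, y_j` with
`{x_i, x_j} ∉ E(H)`, or (3) `{u,v} = {x_i, y_j}` with `i ≠ j`. -/
theorem facets_of_top_minus_one_mfComplex
    {V : Type*} [Fintype V] [DecidableEq V] (H : SimpleGraph V)
    (n : ℕ) (hn : Fintype.card V = n) (hn2 : 2 ≤ n)
    (hgirth : H.girth ≠ 3) :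
    (∀ F : Finset (V ⊕ V), IsFacet (MFFace (whisker H) (n - 1)) F →
      F.card = 2 * n - 2) ∧
    (∀ u v : V ⊕ V, u ≠ v →
      (IsFacet (MFFace (whisker H) (n - 1)) (Finset.univ \ {u, v}) ↔
        (∃ a b : V, u = Sum.inl a ∧ v = Sum.inl b) ∨
        (∃ a b : V, u = Sum.inr a ∧ v = Sum.inr b ∧ ¬ H.Adj a b) ∨
        (∃ a b : V, a ≠ b ∧
          ((u = Sum.inl a ∧ v = Sum.inr b) ∨ (u = Sum.inr b ∧ v = Sum.inl a))))) :=
  facets_of_top_minus_one_mfComplex_general H n hn hgirth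
end
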